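/- Let n ≥ 2 be an integer, 0 < σ < s < 1, M > 0, K > 0, c > 0 and p ∈ [0,1), and set q := σ(n−2s)/(n−2σ). Let Φ : ℝ^n_+ → [0,∞) be measurable with Φ(y) ≤ M (1 + |y|)^{2s−n} and Φ(y) ≤ K y_n^p for a.e. y ∈ ℝ^n_+, and define 𝒲(y,z) := c ∫_{ℝ^n_+} G_s((y,z),ξ) |ξ|^{(σ−s)2*_σ} Φ(ξ)^{2*_σ−1} dξ. Then there exists C = C(n,s,σ,M,K,c) such that 𝒲(y,z) ≤ C y_n^{min(p+q, 1)} for all y ∈ ℝ^n_+ and z ≥ 0 with |y|² + z² ≤ 1. -/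

import Mathlib

open MeasureTheory Real Set ENNReal

/-- The last coordinate `y_n` of a point `y ∈ ℝ^n`. -/
noncomputable def lastCoord {n : ℕ} (y : EuclideanSpace ℝ (Fin n)) : ℝ :=
  if h : 0 < n then y ⟨n - 1, Nat.sub_lt h one_pos⟩ else 0

/-- The open half-space `ℝ^n_+`. -/
def halfSpace (n : ℕ) : Set (EuclideanSpace ℝ (Fin n)) := {y | 0 < lastCoord y}

/-- The kernel `G_s((y,z),ξ)`. -/
noncomputable def GKer (n : ℕ) (s : ℝ) (y : EuclideanSpace ℝ (Fin n)) (z : ℝ)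
    (ξ : EuclideanSpace ℝ (Fin n)) : ℝ :=
  (‖y - ξ‖ ^ 2 + z ^ 2) ^ (-((n : ℝ) - 2 * s) / 2) *
    (1 - (1 + 4 * lastCoord y * lastCoord ξ / (‖y - ξ‖ ^ 2 + z ^ 2)) ^ ((2 * s - (n : ℝ)) / 2))

/-- `𝒲(y,z) := c ∫_{ℝ^n_+} G_s((y,z),ξ) |ξ|^{(σ−s)2*_σ} Φ(ξ)^{2*_σ−1} dξ`. -/
noncomputable def WGreen (n : ℕ) (s σ c : ℝ) (Φ : EuclideanSpace ℝ (Fin n) → ℝ)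
    (y : EuclideanSpace ℝ (Fin n)) (z : ℝ) : ℝ :=
  c * ∫ ξ in halfSpace n,
    GKer n s y z ξ * ‖ξ‖ ^ ((σ - s) * (2 * n / (n - 2 * σ))) *
      Φ ξ ^ (2 * n / (n - 2 * σ) - 1)

/-!
Split the half-space according to the position of `ξ` relative to `y`, and put `t := y_n`.
Near `y` (`|ξ - y| < t/2`) one has `ξ_n ≍ t`, so the crude bound `G_s ≤ |y - ξ|^{2s-n}` and
`Φ ≲ ξ_n^p` leave `t^{q + p(2*_σ-1)} |ξ - y|^{q-n}`. Further out, interpolating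
`1 - (1+x)^{-a} ≤ min(1, a x)` gives `G_s ≲ (y_n ξ_n)^α |y - ξ|^{2s-n-2α}`, which produces the
factor `t^α`; for `|ξ - y| < 2` one has `ξ_n ≤ 3|ξ - y|`, and what remains is a product of a
singularity at `0` and one at `y` whose orders add up to less than `n`, while for `|ξ - y| ≥ 2` the
decay of `Φ` makes the integrand `≲ t^α (1+|ξ|)^{-n-ε}`. Each bound is `t^α` times a fixed
integrable function or a translate of one, so its integral does not depend on `y`.
-/

open Metric

section LastCoord

variable {n : ℕ}

lemma abs_lastCoord_le_norm (x : EuclideanSpace ℝ (Fin n)) : |lastCoord x| ≤ ‖x‖ := by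
  unfold lastCoord
  split
  · exact PiLp.norm_apply_le x _
  · simp

lemma lastCoord_le_norm (x : EuclideanSpace ℝ (Fin n)) : lastCoord x ≤ ‖x‖ :=
  (le_abs_self _).trans (abs_lastCoord_le_norm x)

lemma lastCoord_sub (x y : EuclideanSpace ℝ (Fin n)) :
    lastCoord (x - y) = lastCoord x - lastCoord y := by
  unfold lastCoord
  split <;> simp

lemma abs_lastCoord_sub_le (x y : EuclideanSpace ℝ (Fin n)) :
    |lastCoord x - lastCoord y| ≤ ‖x - y‖ :=
  lastCoord_sub x y ▸ abs_lastCoord_le_norm (x - y)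

lemma measurableSet_halfSpace : MeasurableSet (halfSpace n) := by
  refine measurableSet_lt measurable_const ?_
  unfold lastCoord
  split
  · fun_prop
  · exact measurable_const

end LastCoord

lemma one_sub_one_add_rpow_neg_le_mul {a t : ℝ} (ha : 0 ≤ a) (ht : 0 ≤ t) :
    1 - (1 + t) ^ (-a) ≤ a * t := by
  have hlog : Real.log (1 + t) ≤ t := by
    linarith [Real.log_le_sub_one_of_pos (by linarith : 0 < 1 + t)]
  have := Real.add_one_le_exp (-a * Real.log (1 + t))
  rw [Real.rpow_def_of_pos (by linarith), mul_comm]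
  nlinarith

lemma one_sub_one_add_rpow_neg_le_rpow {a t θ : ℝ} (ha : 0 ≤ a) (ht : 0 ≤ t) (hθ0 : 0 ≤ θ)
    (hθ1 : θ ≤ 1) : 1 - (1 + t) ^ (-a) ≤ (a * t) ^ θ := by
  rcases le_total (a * t) 1 with h | h
  · exact (one_sub_one_add_rpow_neg_le_mul ha ht).trans
      (Real.self_le_rpow_of_le_one (by positivity) h hθ1)
  · have : 0 ≤ (1 + t) ^ (-a) := by positivity
    linarith [Real.one_le_rpow h hθ0]

lemma rpow_neg_mul_rpow_neg_le_add {a b u v : ℝ} (ha : 0 < a) (hb : 0 ≤ b) (hu : 0 ≤ u)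
    (hv : 0 ≤ v) : u ^ (-a) * v ^ (-b) ≤ u ^ (-(a + b)) + v ^ (-(a + b)) := by
  rcases hu.eq_or_lt with rfl | hu
  · rw [Real.zero_rpow (by linarith), zero_mul]
    positivity
  rcases hv.eq_or_lt with rfl | hv
  · rcases hb.eq_or_lt with rfl | hb
    · simp only [add_zero, neg_zero, Real.rpow_zero, mul_one]
      exact le_add_of_nonneg_right (by positivity)
    · rw [Real.zero_rpow (by linarith), mul_zero]
      positivity
  rcases le_total u v with h | h
  · calc u ^ (-a) * v ^ (-b) ≤ u ^ (-a) * u ^ (-b) := mul_le_mul_of_nonneg_left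
          (Real.rpow_le_rpow_of_nonpos hu h (by linarith)) (by positivity)
      _ = u ^ (-(a + b)) := by rw [← Real.rpow_add hu]; ring_nf
      _ ≤ _ := le_add_of_nonneg_right (by positivity)
  · calc u ^ (-a) * v ^ (-b) ≤ v ^ (-a) * v ^ (-b) := mul_le_mul_of_nonneg_right
          (Real.rpow_le_rpow_of_nonpos hv h (by linarith)) (by positivity)
      _ = v ^ (-(a + b)) := by rw [← Real.rpow_add hv]; ring_nf
      _ ≤ _ := le_add_of_nonneg_left (by positivity)

section Kernel

variable {n : ℕ} {s z : ℝ} {y ξ : EuclideanSpace ℝ (Fin n)}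

lemma GKer_nonneg (hsn : 2 * s < n) (hy : 0 ≤ lastCoord y) (hξ : 0 ≤ lastCoord ξ) :
    0 ≤ GKer n s y z ξ := by
  refine mul_nonneg (by positivity) (sub_nonneg.2 (Real.rpow_le_one_of_one_le_of_nonpos ?_ ?_))
  · have : 0 ≤ 4 * lastCoord y * lastCoord ξ / (‖y - ξ‖ ^ 2 + z ^ 2) := by positivity
    linarith
  · linarith

lemma GKer_le (hsn : 2 * s < n) (hy : 0 ≤ lastCoord y) (hξ : 0 ≤ lastCoord ξ) (hyξ : y ≠ ξ)
    {θ : ℝ} (hθ0 : 0 ≤ θ) (hθ1 : θ ≤ 1) :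
    GKer n s y z ξ ≤ (2 * (n - 2 * s) * lastCoord y * lastCoord ξ) ^ θ *
      ‖y - ξ‖ ^ (-(n - 2 * s) - 2 * θ) := by
  have hv : 0 < ‖y - ξ‖ := norm_pos_iff.2 (sub_ne_zero.2 hyξ)
  set R := ‖y - ξ‖ ^ 2 + z ^ 2
  have hvR : ‖y - ξ‖ ^ 2 ≤ R := le_add_of_nonneg_right (sq_nonneg z)
  have hR : 0 < R := (pow_pos hv 2).trans_le hvR
  have hA : 0 ≤ 2 * (n - 2 * s) * lastCoord y * lastCoord ξ := by
    have : (0 : ℝ) ≤ n - 2 * s := by linarith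
    positivity
  have hBernoulli : 1 - (1 + 4 * lastCoord y * lastCoord ξ / R) ^ ((2 * s - n) / 2) ≤
      (2 * (n - 2 * s) * lastCoord y * lastCoord ξ) ^ θ * R ^ (-θ) := by
    calc _ ≤ ((n - 2 * s) / 2 * (4 * lastCoord y * lastCoord ξ / R)) ^ θ := by
          rw [show (2 * s - n) / 2 = -((n - 2 * s) / 2) by ring]
          exact one_sub_one_add_rpow_neg_le_rpow (by linarith) (by positivity) hθ0 hθ1
      _ = _ := by
          rw [Real.rpow_neg hR.le, ← Real.inv_rpow hR.le, ← Real.mul_rpow hA (by positivity)]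
          congr 1
          field_simp
          ring
  calc GKer n s y z ξ ≤ R ^ (-(n - 2 * s) / 2) *
        ((2 * (n - 2 * s) * lastCoord y * lastCoord ξ) ^ θ * R ^ (-θ)) :=
        mul_le_mul_of_nonneg_left hBernoulli (by positivity)
    _ = (2 * (n - 2 * s) * lastCoord y * lastCoord ξ) ^ θ * R ^ ((-(n - 2 * s) - 2 * θ) / 2) := by
        rw [mul_left_comm, ← Real.rpow_add hR]
        ring_nf
    _ ≤ (2 * (n - 2 * s) * lastCoord y * lastCoord ξ) ^ θ *
          (‖y - ξ‖ ^ 2) ^ ((-(n - 2 * s) - 2 * θ) / 2) :=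
        mul_le_mul_of_nonneg_left
          (Real.rpow_le_rpow_of_nonpos (by positivity) hvR (by linarith)) (by positivity)
    _ = _ := by
        rw [← Real.rpow_natCast, ← Real.rpow_mul hv.le]
        ring_nf

end Kernel

lemma rpow_le_of_le_mul_rpow {φ K w p e : ℝ} (hφ0 : 0 ≤ φ) (hK : 0 ≤ K) (hw : 0 ≤ w)
    (he : 0 ≤ e) (hφ : φ ≤ K * w ^ p) : φ ^ e ≤ K ^ e * w ^ (p * e) := by
  calc φ ^ e ≤ (K * w ^ p) ^ e := Real.rpow_le_rpow hφ0 hφ he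
    _ = K ^ e * w ^ (p * e) := by rw [Real.mul_rpow hK (by positivity), ← Real.rpow_mul hw]

lemma rpow_neg_le_mul_rpow_neg {v r b b' : ℝ} (hv : 0 < v) (hvr : v ≤ r) (hb : b ≤ b') :
    v ^ (-b) ≤ r ^ (b' - b) * v ^ (-b') := by
  calc v ^ (-b) = v ^ (b' - b) * v ^ (-b') := by rw [← Real.rpow_add hv]; ring_nf
    _ ≤ r ^ (b' - b) * v ^ (-b') :=
      mul_le_mul_of_nonneg_right (Real.rpow_le_rpow hv.le hvr (by linarith)) (by positivity)

lemma rpow_neg_le_two_rpow_mul {x c β : ℝ} (hc : 0 < c) (hx : c / 2 ≤ x) (hβ : 0 ≤ β) :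
    x ^ (-β) ≤ 2 ^ β * c ^ (-β) := by
  calc x ^ (-β) ≤ (c / 2) ^ (-β) := Real.rpow_le_rpow_of_nonpos (by positivity) hx (by linarith)
    _ = 2 ^ β * c ^ (-β) := by
      rw [Real.div_rpow hc.le zero_le_two, Real.rpow_neg zero_le_two, div_inv_eq_mul, mul_comm]

/-- The exponents of the estimate: `q` stands for `σ(n−2s)/(n−2σ)`, `e` for `2*_σ − 1` and `α` for
`min(p+q, 1)`; the weight `|ξ|^{(σ−s)2*_σ}` becomes `|ξ|^{−2(s−q)}`. -/
structure AdmissibleExponents (n : ℕ) (s q p e α : ℝ) : Prop where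
  q_pos : 0 < q
  q_lt_s : q < s
  two_mul_s_lt : 2 * s < n
  p_nonneg : 0 ≤ p
  one_le_e : 1 ≤ e
  α_pos : 0 < α
  α_le_one : α ≤ 1
  α_le_add : α ≤ p + q
  two_mul_q_le : 2 * q ≤ (n - 2 * s) * e

section Regions

variable {n : ℕ} {s q p e α K M z φ : ℝ} {y ξ : EuclideanSpace ℝ (Fin n)}

lemma near_estimate (h : AdmissibleExponents n s q p e α) (hK : 0 ≤ K)
    (hy : 0 < lastCoord y) (hy1 : lastCoord y ≤ 1) (hyξ : y ≠ ξ)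
    (hnear : ‖ξ - y‖ < lastCoord y / 2) (hφ0 : 0 ≤ φ) (hφ : φ ≤ K * lastCoord ξ ^ p) :
    GKer n s y z ξ * ‖ξ‖ ^ (-(2 * (s - q))) * φ ^ e ≤
      K ^ e * 2 ^ (p * e) * lastCoord y ^ α * ‖ξ - y‖ ^ (-(n - q)) := by
  obtain ⟨hq, hqs, hsn, hp, he, -, -, hα, -⟩ := h
  set t := lastCoord y
  set v := ‖ξ - y‖
  have hv : 0 < v := norm_pos_iff.2 (sub_ne_zero.2 hyξ.symm)
  have hw := abs_le.1 ((abs_lastCoord_sub_le ξ y).trans hnear.le)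
  have hwξ := lastCoord_le_norm ξ
  have ht2 : 0 < t / 2 := by positivity
  have hG : GKer n s y z ξ ≤ (t / 2) ^ (2 * s - q) * v ^ (-(n - q)) :=
    calc GKer n s y z ξ ≤ v ^ (2 * s - q) * v ^ (-(n - q)) := by
          have := GKer_le (z := z) hsn hy.le (by linarith) hyξ le_rfl zero_le_one
          rw [norm_sub_rev, Real.rpow_zero, one_mul] at this
          rw [← Real.rpow_add hv]
          convert this using 2; ring
      _ ≤ _ := mul_le_mul_of_nonneg_right
          (Real.rpow_le_rpow hv.le hnear.le (by linarith)) (by positivity)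
  have hξ : ‖ξ‖ ^ (-(2 * (s - q))) ≤ (t / 2) ^ (-(2 * (s - q))) :=
    Real.rpow_le_rpow_of_nonpos ht2 (by linarith) (by linarith)
  have hφe : φ ^ e ≤ K ^ e * (2 ^ (p * e) * t ^ (p * e)) := by
    rw [← Real.mul_rpow zero_le_two hy.le]
    exact (rpow_le_of_le_mul_rpow hφ0 hK (by linarith) (by linarith) hφ).trans
      (mul_le_mul_of_nonneg_left (Real.rpow_le_rpow (by linarith) (by linarith) (by positivity))
        (by positivity))
  calc GKer n s y z ξ * ‖ξ‖ ^ (-(2 * (s - q))) * φ ^ e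
      ≤ (t / 2) ^ (2 * s - q) * v ^ (-(n - q)) * (t / 2) ^ (-(2 * (s - q))) *
          (K ^ e * (2 ^ (p * e) * t ^ (p * e))) := by
        gcongr
    _ = K ^ e * 2 ^ (p * e) * ((t / 2) ^ q * t ^ (p * e)) * v ^ (-(n - q)) := by
        rw [show q = (2 * s - q) + -(2 * (s - q)) by ring, Real.rpow_add ht2]
        ring_nf
    _ ≤ K ^ e * 2 ^ (p * e) * t ^ α * v ^ (-(n - q)) := by
        gcongr
        calc (t / 2) ^ q * t ^ (p * e) ≤ t ^ q * t ^ (p * e) := by gcongr; linarith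
          _ = t ^ (q + p * e) := (Real.rpow_add hy _ _).symm
          _ ≤ t ^ α := Real.rpow_le_rpow_of_exponent_ge hy hy1 (by nlinarith)

lemma middle_estimate (h : AdmissibleExponents n s q p e α) (hK : 0 ≤ K)
    (hy : 0 < lastCoord y) (hξ : 0 < lastCoord ξ) (hmid : lastCoord y / 2 ≤ ‖ξ - y‖)
    (hv2 : ‖ξ - y‖ < 2) (hφ0 : 0 ≤ φ) (hφ : φ ≤ K * lastCoord ξ ^ p) {β : ℝ} (hβ0 : 0 ≤ β)
    (hβ : n - 2 * s + α - p * e ≤ β) :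
    GKer n s y z ξ * ‖ξ‖ ^ (-(2 * (s - q))) * φ ^ e ≤
      (2 * (n - 2 * s)) ^ α * K ^ e * 3 ^ (α + p * e) * 2 ^ (β - (n - 2 * s + α - p * e)) *
        lastCoord y ^ α * (‖ξ‖ ^ (-(2 * (s - q) + β)) + ‖ξ - y‖ ^ (-(2 * (s - q) + β))) := by
  obtain ⟨hq, hqs, hsn, hp, he, hα0, hα1, -, -⟩ := h
  have hv : 0 < ‖ξ - y‖ := by linarith
  have hA : 0 ≤ 2 * (n - 2 * s) := by linarith
  have hG := GKer_le (z := z) hsn hy.le hξ.le (sub_ne_zero.1 (norm_pos_iff.1 hv)).symm hα0.le hα1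
  rw [norm_sub_rev, Real.mul_rpow (by positivity) hξ.le, Real.mul_rpow hA hy.le] at hG
  have hφe := rpow_le_of_le_mul_rpow (e := e) hφ0 hK hξ.le (by linarith) hφ
  set t := lastCoord y
  set w := lastCoord ξ
  set v := ‖ξ - y‖
  have hwv : w ≤ 3 * v := by linarith [(abs_le.1 (abs_lastCoord_sub_le ξ y)).2]
  have hw : w ^ α * w ^ (p * e) ≤ 3 ^ (α + p * e) * v ^ (α + p * e) := by
    rw [← Real.rpow_add hξ, ← Real.mul_rpow zero_le_three hv.le]
    exact Real.rpow_le_rpow hξ.le hwv (by positivity)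
  have hvb : v ^ (α + p * e) * v ^ (-(n - 2 * s) - 2 * α) ≤
      2 ^ (β - (n - 2 * s + α - p * e)) * v ^ (-β) := by
    rw [← Real.rpow_add hv,
      show α + p * e + (-(n - 2 * s) - 2 * α) = -(n - 2 * s + α - p * e) by ring]
    exact rpow_neg_le_mul_rpow_neg hv hv2.le hβ
  calc GKer n s y z ξ * ‖ξ‖ ^ (-(2 * (s - q))) * φ ^ e
      ≤ (2 * (n - 2 * s)) ^ α * t ^ α * w ^ α * v ^ (-(n - 2 * s) - 2 * α) *
          ‖ξ‖ ^ (-(2 * (s - q))) * (K ^ e * w ^ (p * e)) := by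
        gcongr
    _ = (2 * (n - 2 * s)) ^ α * K ^ e * t ^ α * (w ^ α * w ^ (p * e)) *
          v ^ (-(n - 2 * s) - 2 * α) * ‖ξ‖ ^ (-(2 * (s - q))) := by ring
    _ ≤ (2 * (n - 2 * s)) ^ α * K ^ e * t ^ α * (3 ^ (α + p * e) * v ^ (α + p * e)) *
          v ^ (-(n - 2 * s) - 2 * α) * ‖ξ‖ ^ (-(2 * (s - q))) := by gcongr
    _ = (2 * (n - 2 * s)) ^ α * K ^ e * 3 ^ (α + p * e) * t ^ α *
          (v ^ (α + p * e) * v ^ (-(n - 2 * s) - 2 * α)) * ‖ξ‖ ^ (-(2 * (s - q))) := by ring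
    _ ≤ (2 * (n - 2 * s)) ^ α * K ^ e * 3 ^ (α + p * e) * t ^ α *
          (2 ^ (β - (n - 2 * s + α - p * e)) * v ^ (-β)) * ‖ξ‖ ^ (-(2 * (s - q))) := by gcongr
    _ = (2 * (n - 2 * s)) ^ α * K ^ e * 3 ^ (α + p * e) * 2 ^ (β - (n - 2 * s + α - p * e)) *
          t ^ α * (‖ξ‖ ^ (-(2 * (s - q))) * v ^ (-β)) := by ring
    _ ≤ _ := by
        gcongr
        exact rpow_neg_mul_rpow_neg_le_add (by linarith) hβ0 (norm_nonneg _) hv.le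

lemma far_estimate (h : AdmissibleExponents n s q p e α) (hM : 0 ≤ M)
    (hy : 0 < lastCoord y) (hy1 : ‖y‖ ≤ 1) (hξ : 0 < lastCoord ξ) (hfar : 2 ≤ ‖ξ - y‖)
    (hφ0 : 0 ≤ φ) (hφ : φ ≤ M * (1 + ‖ξ‖) ^ (2 * s - n)) :
    GKer n s y z ξ * ‖ξ‖ ^ (-(2 * (s - q))) * φ ^ e ≤
      (2 * (n - 2 * s)) ^ α * M ^ e * 2 ^ (n - 2 * s + 2 * α) * 2 ^ (2 * (s - q)) *
        lastCoord y ^ α *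
        (1 + ‖ξ‖) ^ (-(n - 2 * s) * (1 + e) - α - 2 * (s - q)) := by
  obtain ⟨hq, hqs, hsn, hp, he, hα0, hα1, -, -⟩ := h
  have hv : 0 < ‖ξ - y‖ := by linarith
  have hA : 0 ≤ 2 * (n - 2 * s) := by linarith
  have hG := GKer_le (z := z) hsn hy.le hξ.le (sub_ne_zero.1 (norm_pos_iff.1 hv)).symm hα0.le hα1
  rw [norm_sub_rev, Real.mul_rpow (by positivity) hξ.le, Real.mul_rpow hA hy.le] at hG
  have hφe := rpow_le_of_le_mul_rpow (e := e) hφ0 hM (by positivity) (by linarith) hφ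
  have hu : 0 < 1 + ‖ξ‖ := by positivity
  have hv : (1 + ‖ξ‖) / 2 ≤ ‖ξ - y‖ := by linarith [norm_sub_norm_le ξ y]
  have hξ1 : (1 + ‖ξ‖) / 2 ≤ ‖ξ‖ := by linarith [norm_sub_le ξ y]
  calc GKer n s y z ξ * ‖ξ‖ ^ (-(2 * (s - q))) * φ ^ e
      ≤ (2 * (n - 2 * s)) ^ α * lastCoord y ^ α * lastCoord ξ ^ α *
          ‖ξ - y‖ ^ (-(n - 2 * s + 2 * α)) * ‖ξ‖ ^ (-(2 * (s - q))) *
          (M ^ e * (1 + ‖ξ‖) ^ ((2 * s - n) * e)) := by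
        rw [neg_add']
        gcongr
    _ ≤ (2 * (n - 2 * s)) ^ α * lastCoord y ^ α * (1 + ‖ξ‖) ^ α *
          (2 ^ (n - 2 * s + 2 * α) * (1 + ‖ξ‖) ^ (-(n - 2 * s + 2 * α))) *
          (2 ^ (2 * (s - q)) * (1 + ‖ξ‖) ^ (-(2 * (s - q)))) *
          (M ^ e * (1 + ‖ξ‖) ^ ((2 * s - n) * e)) := by
        gcongr
        · linarith [lastCoord_le_norm ξ]
        · exact rpow_neg_le_two_rpow_mul hu hv (by linarith)
        · exact rpow_neg_le_two_rpow_mul hu hξ1 (by linarith)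
    _ = _ := by
        rw [show -(n - 2 * s) * (1 + e) - α - 2 * (s - q) =
          α + -(n - 2 * s + 2 * α) + -(2 * (s - q)) + (2 * s - n) * e by ring,
          Real.rpow_add hu, Real.rpow_add hu, Real.rpow_add hu]
        ring

end Regions

lemma integrable_indicator_ball_norm_rpow_neg {E : Type*} [NormedAddCommGroup E] [NormedSpace ℝ E]
    [FiniteDimensional ℝ E] [MeasurableSpace E] [BorelSpace E] {μ : Measure E}
    [μ.IsAddHaarMeasure] (hE : 1 ≤ Module.finrank ℝ E) {β : ℝ} (hβ : β < Module.finrank ℝ E)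
    (r : ℝ) : Integrable ((ball (0 : E) r).indicator fun x ↦ ‖x‖ ^ (-β)) μ := by
  refine (integrableOn_ball_of_norm_le_rpow hE hβ (C := 1) (ae_of_all _ fun x ↦ ?_)
    (measurable_norm.pow_const _).aestronglyMeasurable).integrable_indicator measurableSet_ball
  rw [one_mul, Real.norm_of_nonneg (by positivity)]

section Majorant

variable {n : ℕ} {s q p e α K M : ℝ}

theorem exists_integrable_majorant (h : AdmissibleExponents n s q p e α) (hK : 0 ≤ K) (hM : 0 ≤ M) :
    ∃ C ≥ 0, ∃ P Q : EuclideanSpace ℝ (Fin n) → ℝ, Integrable P ∧ Integrable Q ∧ 0 ≤ P ∧ 0 ≤ Q ∧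
      ∀ y ξ : EuclideanSpace ℝ (Fin n), ∀ z φ : ℝ, 0 < lastCoord y → ‖y‖ ≤ 1 →
        0 < lastCoord ξ → y ≠ ξ → 0 ≤ φ → φ ≤ K * lastCoord ξ ^ p →
        φ ≤ M * (1 + ‖ξ‖) ^ (2 * s - n) →
        GKer n s y z ξ * ‖ξ‖ ^ (-(2 * (s - q))) * φ ^ e ≤
          C * lastCoord y ^ α * (P (ξ - y) + Q ξ) := by
  have hsn := h.two_mul_s_lt
  have hq := h.q_pos
  have hqs := h.q_lt_s
  have hα := h.α_pos
  have hpe : p ≤ p * e := le_mul_of_one_le_right h.p_nonneg h.one_le_e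
  have hαpe : α < 2 * q + p * e := by linarith [h.α_le_add]
  set β := max (n - 2 * s + α - p * e) 0
  set γ := 2 * (s - q) + β
  set T := -(n - 2 * s) * (1 + e) - α - 2 * (s - q)
  set c₁ := K ^ e * 2 ^ (p * e)
  set c₂ := (2 * (n - 2 * s)) ^ α * K ^ e * 3 ^ (α + p * e) * 2 ^ (β - (n - 2 * s + α - p * e))
  set c₃ := (2 * (n - 2 * s)) ^ α * M ^ e * 2 ^ (n - 2 * s + 2 * α) * 2 ^ (2 * (s - q))
  have hA : 0 ≤ 2 * ((n : ℝ) - 2 * s) := by linarith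
  have hc₁ : 0 ≤ c₁ := by positivity
  have hc₂ : 0 ≤ c₂ := by positivity
  have hc₃ : 0 ≤ c₃ := by positivity
  let ρ : ℝ → EuclideanSpace ℝ (Fin n) → ℝ := fun β ↦ (ball 0 3).indicator fun x ↦ ‖x‖ ^ (-β)
  have hρ0 : ∀ β x, 0 ≤ ρ β x := fun β x ↦ indicator_nonneg (fun x _ ↦ by positivity) x
  have hρ : ∀ β x, ‖x‖ < 3 → ρ β x = ‖x‖ ^ (-β) := fun β x hx ↦
    indicator_of_mem (mem_ball_zero_iff.2 hx) _
  have hdim : 1 ≤ Module.finrank ℝ (EuclideanSpace ℝ (Fin n)) := by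
    rw [finrank_euclideanSpace_fin]
    exact_mod_cast (show (0 : ℝ) < n by linarith)
  have hρint : ∀ β < (n : ℝ), Integrable (ρ β) := fun β hβ ↦
    integrable_indicator_ball_norm_rpow_neg hdim (by rwa [finrank_euclideanSpace_fin]) 3
  have hγ : γ < n := by
    rcases le_total (n - 2 * s + α - p * e) 0 with hb | hb
    · simp only [γ, β, max_eq_right hb]; linarith
    · simp only [γ, β, max_eq_left hb]; linarith
  have hT : Integrable fun x : EuclideanSpace ℝ (Fin n) ↦ (1 + ‖x‖) ^ T := by
    have := integrable_one_add_norm (E := EuclideanSpace ℝ (Fin n)) (μ := volume) (r := -T)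
      (by rw [finrank_euclideanSpace_fin]; nlinarith [h.two_mul_q_le])
    simpa using this
  refine ⟨c₁ + c₂ + c₃, by positivity, fun x ↦ ρ (n - q) x + ρ γ x, fun x ↦ ρ γ x + (1 + ‖x‖) ^ T,
    (hρint _ (by linarith)).add (hρint _ hγ), (hρint _ hγ).add hT,
    fun x ↦ add_nonneg (hρ0 _ x) (hρ0 _ x), fun x ↦ add_nonneg (hρ0 _ x) (by positivity), ?_⟩
  intro y ξ z φ hy hy1 hξ hyξ hφ0 hφK hφM
  have hP0 := hρ0 (n - q) (ξ - y)
  have hP0' := hρ0 γ (ξ - y)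
  have hQ0 := hρ0 γ ξ
  have hQ0' : 0 ≤ (1 + ‖ξ‖) ^ T := by positivity
  beta_reduce
  have hC : 0 ≤ (c₁ + c₂ + c₃) * lastCoord y ^ α := by positivity
  rcases lt_or_ge ‖ξ - y‖ (lastCoord y / 2) with hnear | hmid
  · have hv3 : ‖ξ - y‖ < 3 := by linarith [lastCoord_le_norm y]
    refine (near_estimate h hK hy ((lastCoord_le_norm y).trans hy1) hyξ hnear hφ0 hφK).trans
      (mul_le_mul (by gcongr; linarith) ?_ (by positivity) hC)
    linarith [hρ (n - q) _ hv3]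
  rcases lt_or_ge ‖ξ - y‖ 2 with hmid2 | hfar
  · have hξ3 : ‖ξ‖ < 3 := by linarith [norm_sub_norm_le ξ y]
    refine (middle_estimate h hK hy hξ hmid hmid2 hφ0 hφK (le_max_right _ _)
      (le_max_left _ _)).trans (mul_le_mul (by gcongr; linarith) ?_ (by positivity) hC)
    linarith [hρ γ _ hξ3, hρ γ (ξ - y) (by linarith)]
  · refine (far_estimate h hM hy hy1 hξ hfar hφ0 hφM).trans
      (mul_le_mul (by gcongr; linarith) ?_ (by positivity) hC)
    linarith

end Majorant

lemma setIntegral_le_mul_integral_add_integral {G : Type*} [MeasurableSpace G] [AddGroup G]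
    [MeasurableAdd G] {μ : Measure G} [μ.IsAddRightInvariant] {S : Set G} {F P Q : G → ℝ}
    {c : ℝ} (y : G) (hc : 0 ≤ c) (hP : Integrable P μ) (hQ : Integrable Q μ) (hP0 : 0 ≤ P)
    (hQ0 : 0 ≤ Q) (hF0 : ∀ᵐ x ∂μ.restrict S, 0 ≤ F x)
    (hF : ∀ᵐ x ∂μ.restrict S, F x ≤ c * (P (x - y) + Q x)) :
    ∫ x in S, F x ∂μ ≤ c * ((∫ x, P x ∂μ) + ∫ x, Q x ∂μ) := by
  have hPy := hP.comp_sub_right y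
  have hI := (hPy.add hQ).const_mul c
  calc ∫ x in S, F x ∂μ ≤ ∫ x in S, c * (P (x - y) + Q x) ∂μ :=
        integral_mono_of_nonneg hF0 hI.integrableOn hF
    _ ≤ ∫ x, c * (P (x - y) + Q x) ∂μ :=
        setIntegral_le_integral hI (ae_of_all _ fun x ↦ mul_nonneg hc (add_nonneg (hP0 _) (hQ0 _)))
    _ = c * ((∫ x, P x ∂μ) + ∫ x, Q x ∂μ) := by
        rw [integral_const_mul, integral_add hPy hQ, integral_sub_right_eq_self]

theorem exists_setIntegral_halfSpace_le {n : ℕ} {s q p e α K M : ℝ}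
    (h : AdmissibleExponents n s q p e α) (hK : 0 ≤ K) (hM : 0 ≤ M)
    {Φ : EuclideanSpace ℝ (Fin n) → ℝ} (hΦ0 : ∀ y, 0 ≤ Φ y)
    (hΦM : ∀ᵐ y : EuclideanSpace ℝ (Fin n), y ∈ halfSpace n → Φ y ≤ M * (1 + ‖y‖) ^ (2 * s - n))
    (hΦK : ∀ᵐ y : EuclideanSpace ℝ (Fin n), y ∈ halfSpace n → Φ y ≤ K * lastCoord y ^ p) :
    ∃ B ≥ 0, ∀ y : EuclideanSpace ℝ (Fin n), 0 < lastCoord y → ‖y‖ ≤ 1 → ∀ z : ℝ,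
      ∫ ξ in halfSpace n, GKer n s y z ξ * ‖ξ‖ ^ (-(2 * (s - q))) * Φ ξ ^ e ≤
        B * lastCoord y ^ α := by
  obtain ⟨C, hC, P, Q, hP, hQ, hP0, hQ0, hmaj⟩ := exists_integrable_majorant h hK hM
  refine ⟨C * ((∫ x, P x) + ∫ x, Q x),
    mul_nonneg hC (add_nonneg (integral_nonneg hP0) (integral_nonneg hQ0)), fun y hy hy1 z ↦ ?_⟩
  have hn : (0 : ℝ) < n := by linarith [h.two_mul_s_lt, h.q_pos, h.q_lt_s]
  have : Nontrivial (EuclideanSpace ℝ (Fin n)) :=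
    Module.nontrivial_of_finrank_pos (R := ℝ) (by simpa using hn)
  have hH : ∀ᵐ ξ ∂volume.restrict (halfSpace n), ξ ∈ halfSpace n :=
    ae_restrict_mem measurableSet_halfSpace
  refine (setIntegral_le_mul_integral_add_integral (c := C * lastCoord y ^ α) y (by positivity)
    hP hQ hP0 hQ0 ?_ ?_).trans_eq (by ring)
  · filter_upwards [hH] with ξ hξ
    exact mul_nonneg (mul_nonneg (GKer_nonneg h.two_mul_s_lt hy.le hξ.le) (by positivity))
      (by have := hΦ0 ξ; positivity)
  · filter_upwards [hH, ae_restrict_of_ae hΦM, ae_restrict_of_ae hΦK,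
      ae_restrict_of_ae (Measure.ae_ne volume y)] with ξ hξ hξM hξK hξy
    exact hmaj y ξ z (Φ ξ) hy hy1 hξ (Ne.symm hξy) (hΦ0 ξ) (hξK hξ) (hξM hξ)

section Concrete

variable {n : ℕ} {s σ : ℝ}

theorem admissibleExponents_of {p : ℝ} (hn : 2 ≤ n) (hσ : 0 < σ) (hσs : σ < s) (hs : s < 1)
    (hp : 0 ≤ p) :
    AdmissibleExponents n s (σ * (n - 2 * s) / (n - 2 * σ)) p (2 * n / (n - 2 * σ) - 1)
      (min (p + σ * (n - 2 * s) / (n - 2 * σ)) 1) := by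
  have hn' : (2 : ℝ) ≤ n := by exact_mod_cast hn
  have hnσ : 0 < (n : ℝ) - 2 * σ := by linarith
  have hq : 0 < σ * (n - 2 * s) / (n - 2 * σ) := div_pos (mul_pos hσ (by linarith)) hnσ
  refine ⟨hq, ?_, by linarith, hp, ?_, lt_min (by linarith) one_pos, min_le_right _ _,
    min_le_left _ _, ?_⟩
  · rw [div_lt_iff₀ hnσ]
    nlinarith
  · rw [le_sub_iff_add_le, le_div_iff₀ hnσ]
    linarith
  · rw [div_sub_one hnσ.ne', ← mul_div_assoc, ← mul_div_assoc, div_le_div_iff_of_pos_right hnσ]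
    nlinarith

lemma weight_exponent_eq (hσs : σ < s) (hs : s < 1) (hn : 2 ≤ n) :
    (σ - s) * (2 * n / (n - 2 * σ)) = -(2 * (s - σ * (n - 2 * s) / (n - 2 * σ))) := by
  have hn' : (2 : ℝ) ≤ n := by exact_mod_cast hn
  have hnσ : (n : ℝ) - 2 * σ ≠ 0 := by linarith
  simp only [div_eq_mul_inv]
  linear_combination (-2 * s) * mul_inv_cancel₀ hnσ

end Concrete

theorem stmt11_general (n : ℕ) (hn : 2 ≤ n) (s σ : ℝ) (hσ : 0 < σ) (hσs : σ < s) (hs : s < 1)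
    (M K c p : ℝ) (hM : 0 < M) (hK : 0 < K) (hc : 0 < c) (hp : p ∈ Ico (0 : ℝ) 1)
    (Φ : EuclideanSpace ℝ (Fin n) → ℝ) (hΦ0 : ∀ y, 0 ≤ Φ y)
    (hbound₁ : ∀ᵐ y : EuclideanSpace ℝ (Fin n), y ∈ halfSpace n →
      Φ y ≤ M * (1 + ‖y‖) ^ (2 * s - (n : ℝ)))
    (hbound₂ : ∀ᵐ y : EuclideanSpace ℝ (Fin n), y ∈ halfSpace n →
      Φ y ≤ K * lastCoord y ^ p) :
    ∃ C > (0 : ℝ), ∀ y : EuclideanSpace ℝ (Fin n), y ∈ halfSpace n → ∀ z : ℝ, 0 ≤ z →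
      ‖y‖ ^ 2 + z ^ 2 ≤ 1 →
      WGreen n s σ c Φ y z ≤
        C * lastCoord y ^ min (p + σ * ((n : ℝ) - 2 * s) / ((n : ℝ) - 2 * σ)) 1 := by
  obtain ⟨B, hB, hint⟩ := exists_setIntegral_halfSpace_le
    (admissibleExponents_of hn hσ hσs hs hp.1) hK.le hM.le hΦ0 hbound₁ hbound₂
  refine ⟨c * B + 1, by positivity, fun y hy z _ hyz ↦ ?_⟩
  have hy1 : ‖y‖ ≤ 1 := by nlinarith [norm_nonneg y, sq_nonneg z]
  have hyα : 0 < lastCoord y ^ min (p + σ * ((n : ℝ) - 2 * s) / ((n : ℝ) - 2 * σ)) 1 :=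
    Real.rpow_pos_of_pos hy _
  rw [WGreen, weight_exponent_eq hσs hs hn]
  calc _ ≤ c * (B * _) := mul_le_mul_of_nonneg_left (hint y hy hy1 z) hc.le
    _ ≤ (c * B + 1) * _ := by nlinarith

theorem stmt11 (n : ℕ) (hn : 2 ≤ n) (s σ : ℝ) (hσ : 0 < σ) (hσs : σ < s) (hs : s < 1)
    (M K c p : ℝ) (hM : 0 < M) (hK : 0 < K) (hc : 0 < c) (hp : p ∈ Ico (0 : ℝ) 1)
    (Φ : EuclideanSpace ℝ (Fin n) → ℝ) (hmeas : Measurable Φ) (hΦ0 : ∀ y, 0 ≤ Φ y)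
    (hbound₁ : ∀ᵐ y : EuclideanSpace ℝ (Fin n), y ∈ halfSpace n →
      Φ y ≤ M * (1 + ‖y‖) ^ (2 * s - (n : ℝ)))
    (hbound₂ : ∀ᵐ y : EuclideanSpace ℝ (Fin n), y ∈ halfSpace n →
      Φ y ≤ K * lastCoord y ^ p) :
    ∃ C > (0 : ℝ), ∀ y : EuclideanSpace ℝ (Fin n), y ∈ halfSpace n → ∀ z : ℝ, 0 ≤ z →
      ‖y‖ ^ 2 + z ^ 2 ≤ 1 →
      WGreen n s σ c Φ y z ≤
        C * lastCoord y ^ min (p + σ * ((n : ℝ) - 2 * s) / ((n : ℝ) - 2 * σ)) 1 :=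
  stmt11_general n hn s σ hσ hσs hs M K c p hM hK hc hp Φ hΦ0 hbound₁ hbound₂
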